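/- There is a ring isomorphism B/q ≅ (A/p)⟦y⟧ between the quotient of B by q and the formal power series ring in one variable over A/p; in particular, q is a prime ideal of B. -/

import Mathlib

open MvPowerSeries

/-- The ideal `(xy - c)` in the formal power series ring `A⟦x,y⟧`, where `x = X 0`,
`y = X 1`. -/
noncomputable def hyperIdeal (A : Type) [CommRing A] (c : A) :
    Ideal (MvPowerSeries (Fin 2) A) :=
  Ideal.span {X 0 * X 1 - C (σ := Fin 2) (R := A) c}

/-- The ring `B = A⟦x,y⟧/(xy - c)`. -/
abbrev Bring (A : Type) [CommRing A] (c : A) : Type :=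
  MvPowerSeries (Fin 2) A ⧸ hyperIdeal A c

/-- The ideal `q` of `B` generated by (the image of) a prime ideal `p` of `A`
together with the class of `x`. -/
noncomputable def qIdeal (A : Type) [CommRing A] (c : A) (p : Ideal A) :
    Ideal (Bring A c) :=
  Ideal.span (insert (Ideal.Quotient.mk (hyperIdeal A c) (X 0))
    ((fun a => Ideal.Quotient.mk (hyperIdeal A c) (C (σ := Fin 2) (R := A) a)) '' (p : Set A)))

/-!
Reducing coefficients modulo `p` and then setting `x = 0` is a surjection
`A⟦x,y⟧ → (A/p)⟦y⟧`. Its kernel is `(x) + p·A⟦x,y⟧`: a series in the kernel is congruent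
modulo `x` to one with all coefficients in `p`, and as `p` is finitely generated, by `a₁, …, aₖ`
say, such a series is `∑ aᵢ gᵢ` with the `gᵢ` assembled coefficientwise. Since
`xy - c ∈ (x) + p·A⟦x,y⟧`, this kernel is the preimage of `q`, so `B/q ≅ (A/p)⟦y⟧`, a domain.
-/

theorem Finsupp.single_one_apply_one_eq_self {d : Fin 2 →₀ ℕ} (hd : d 0 = 0) :
    Finsupp.single 1 (d 1) = d := by
  ext i
  fin_cases i <;> simp [hd]

namespace MvPowerSeries

variable {σ R S : Type*} [CommRing R] [CommRing S]

theorem map_surjective {f : R →+* S} (hf : Function.Surjective f) :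
    Function.Surjective (map (σ := σ) f) := fun g =>
  ⟨fun d => Function.surjInv hf (coeff d g), by
    ext d; exact Function.surjInv_eq hf (coeff d g)⟩

theorem ker_map_mk_of_fg {I : Ideal R} (hI : I.FG) :
    RingHom.ker (map (σ := σ) (Ideal.Quotient.mk I)) = I.map C := by
  refine le_antisymm (fun f hf => ?_) (Ideal.map_le_iff_le_comap.mpr fun a ha => ?_)
  · obtain ⟨s, rfl⟩ := hI
    have hcoeff (d : σ →₀ ℕ) : ∃ c : R → R, ∑ a ∈ s, c a * a = coeff d f := by
      have : coeff d f ∈ Ideal.span s := by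
        simpa [Ideal.Quotient.eq_zero_iff_mem] using congr_arg (coeff d) hf
      obtain ⟨c, -, hc⟩ := Submodule.mem_span_finset.mp this
      exact ⟨c, hc⟩
    choose c hc using hcoeff
    let g : R → MvPowerSeries σ R := fun a d => c d a
    have hf : f = ∑ a ∈ s, C a * g a := by
      ext d
      simp only [map_sum, coeff_C_mul, ← hc d, mul_comm]
      rfl
    rw [hf]
    exact Ideal.sum_mem _ fun a ha =>
      Ideal.mul_mem_right _ _ (Ideal.mem_map_of_mem _ (Ideal.subset_span ha))
  · ext d
    simp [Ideal.Quotient.eq_zero_iff_mem.mpr ha]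

variable (R) in
noncomputable def specializeXZero : MvPowerSeries (Fin 2) R →+* PowerSeries R where
  toFun f := PowerSeries.mk fun n => coeff (Finsupp.single 1 n) f
  map_one' := by
    ext n
    simp [coeff_one, Finsupp.single_eq_zero]
  map_mul' f g := by
    ext n
    rw [PowerSeries.coeff_mk, coeff_mul, PowerSeries.coeff_mul, Finsupp.antidiagonal_single,
      Finset.sum_map]
    simp
  map_zero' := by
    ext n
    simp
  map_add' f g := by
    ext n
    simp

@[simp]
theorem coeff_specializeXZero (f : MvPowerSeries (Fin 2) R) (n : ℕ) :
    PowerSeries.coeff n (specializeXZero R f) = coeff (Finsupp.single 1 n) f :=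
  PowerSeries.coeff_mk n (fun n => coeff (Finsupp.single 1 n) f)

theorem specializeXZero_surjective : Function.Surjective (specializeXZero R) := by
  intro g
  let f : MvPowerSeries (Fin 2) R := fun d => if d 0 = 0 then PowerSeries.coeff (d 1) g else 0
  refine ⟨f, PowerSeries.ext fun n => ?_⟩
  change ite _ _ _ = _
  simp

theorem ker_specializeXZero : RingHom.ker (specializeXZero R) = Ideal.span {X 0} := by
  ext f
  rw [Ideal.mem_span_singleton, X_dvd_iff, RingHom.mem_ker, PowerSeries.ext_iff]
  refine ⟨fun h m hm => ?_, fun h n => h _ (by simp)⟩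
  simpa [Finsupp.single_one_apply_one_eq_self hm] using h (m 1)

theorem ker_specializeXZero_comp_map_mk {I : Ideal R} (hI : I.FG) :
    RingHom.ker ((specializeXZero (R ⧸ I)).comp (map (Ideal.Quotient.mk I))) =
      Ideal.span {X 0} ⊔ I.map C := by
  rw [← RingHom.comap_ker, ker_specializeXZero, ← map_X (Ideal.Quotient.mk I),
    ← Set.image_singleton, ← Ideal.map_span,
    Ideal.comap_map_of_surjective _ (map_surjective Ideal.Quotient.mk_surjective),
    ← RingHom.ker_eq_comap_bot, ker_map_mk_of_fg hI]

end MvPowerSeries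

theorem quotient_iso_powerSeries_general (A : Type) [CommRing A] [IsNoetherianRing A] (c : A)
    (p : Ideal A) [p.IsPrime] (hcp : c ∈ p) :
    Nonempty ((Bring A c ⧸ qIdeal A c p) ≃+* PowerSeries (A ⧸ p)) ∧
      (qIdeal A c p).IsPrime := by
  set J : Ideal (MvPowerSeries (Fin 2) A) := Ideal.span {X 0} ⊔ p.map C
  have hIJ : hyperIdeal A c ≤ J := by
    rw [hyperIdeal, Ideal.span_le, Set.singleton_subset_iff]
    have hx : X 0 ∈ J := Ideal.mem_sup_left (Ideal.mem_span_singleton_self _)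
    exact J.sub_mem (J.mul_mem_right _ hx) (Ideal.mem_sup_right (Ideal.mem_map_of_mem _ hcp))
  have hq : qIdeal A c p = J.map (Ideal.Quotient.mk _) := by
    rw [qIdeal, Ideal.span_insert, Ideal.map_sup, Ideal.map_span, Set.image_singleton,
      Ideal.map_map]
    rfl
  have hker := ker_specializeXZero_comp_map_mk (IsNoetherian.noetherian p)
  have hsurj :=
    specializeXZero_surjective.comp (map_surjective (Ideal.Quotient.mk_surjective (I := p)))
  let e : (Bring A c ⧸ qIdeal A c p) ≃+* PowerSeries (A ⧸ p) :=
    (Ideal.quotEquivOfEq hq).trans <| (DoubleQuot.quotQuotEquivQuotOfLE hIJ).trans <|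
      (Ideal.quotEquivOfEq hker.symm).trans (RingHom.quotientKerEquivOfSurjective hsurj)
  have : IsDomain (Bring A c ⧸ qIdeal A c p) := e.toMulEquiv.isDomain _
  exact ⟨⟨e⟩, (Ideal.Quotient.isDomain_iff_prime _).mp this⟩

/-- Let `A` be a Noetherian local ring, `c` an element of its maximal ideal,
`B = A⟦x,y⟧/(xy - c)`, `p` a prime ideal of `A` containing `c` and `q` the ideal of `B`
generated by `p` and `x`.  Then `B/q` is isomorphic, as a ring, to `(A/p)⟦y⟧`;
in particular `q` is a prime ideal of `B`. -/
theorem quotient_iso_powerSeries (A : Type) [CommRing A] [IsNoetherianRing A]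
    [IsLocalRing A] (c : A) (hc : c ∈ IsLocalRing.maximalIdeal A)
    (p : Ideal A) [p.IsPrime] (hcp : c ∈ p) :
    Nonempty ((Bring A c ⧸ qIdeal A c p) ≃+* PowerSeries (A ⧸ p)) ∧
      (qIdeal A c p).IsPrime :=
  quotient_iso_powerSeries_general A c p hcp
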